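/- Let p be a probability distribution over a finite alphabet X whose coordinates all exceed λ, where 0 < λ < 1/4, and let q be any probability distribution on X. Then H( λq + (1−λ)p ) ≤ H(p) + (|X| − 1) λ log(1/λ). -/

import Mathlib

/-!
Write `m = λq + (1-λ)p`. Gibbs' inequality bounds `H(m)` by the cross entropy `-∑ m log p`,
which equals `H(p) + λ ∑ (p - q) log p`. Since `p - q` sums to zero, the last sum does not
change when `log p` is shifted by its value at a fixed symbol `a`, and then each of the
`|X| - 1` terms with `x ≠ a` is at most `|p x - q x| · |log p x - log p a| ≤ log (1/λ)`.
-/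

open Finset Real

section

variable {X : Type*} [Fintype X]

lemma mul_log_sub_mul_log_le {a b : ℝ} (ha : 0 ≤ a) (hb : 0 < b) :
    a * log b - a * log a ≤ b - a := by
  rcases ha.eq_or_lt with rfl | ha
  · simpa using hb.le
  have h := mul_le_mul_of_nonneg_left (log_le_sub_one_of_pos (div_pos hb ha)) ha.le
  rwa [log_div hb.ne' ha.ne', mul_sub, mul_sub, mul_div_cancel₀ _ ha.ne', mul_one] at h

lemma sum_mul_log_le_sum_mul_log_self {m p : X → ℝ} (hm : ∀ x, 0 ≤ m x) (hp : ∀ x, 0 < p x)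
    (hsum : ∑ x, p x ≤ ∑ x, m x) :
    ∑ x, m x * log (p x) ≤ ∑ x, m x * log (m x) := by
  have h : ∑ x, (m x * log (p x) - m x * log (m x)) ≤ ∑ x, (p x - m x) :=
    sum_le_sum fun x _ => mul_log_sub_mul_log_le (hm x) (hp x)
  rw [sum_sub_distrib, sum_sub_distrib] at h
  linarith

lemma neg_sum_mul_log_mix_le {p q : X → ℝ} {l : ℝ} (hp : ∀ x, 0 < p x) (hq : ∀ x, 0 ≤ q x)
    (hsum : ∑ x, p x = ∑ x, q x) (hl0 : 0 ≤ l) (hl1 : l ≤ 1) :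
    -∑ x, (l * q x + (1 - l) * p x) * log (l * q x + (1 - l) * p x)
      ≤ -∑ x, p x * log (p x) + l * ∑ x, (p x - q x) * log (p x) := by
  have hm : ∀ x, 0 ≤ l * q x + (1 - l) * p x := fun x => by
    have := hp x; have := hq x; positivity
  have hmsum : ∑ x, p x ≤ ∑ x, (l * q x + (1 - l) * p x) := by
    rw [sum_add_distrib, ← mul_sum, ← mul_sum, ← hsum]; linarith
  have hcross : ∑ x, (l * q x + (1 - l) * p x) * log (p x)
      = ∑ x, p x * log (p x) - l * ∑ x, (p x - q x) * log (p x) := by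
    rw [mul_sum, ← sum_sub_distrib]; exact sum_congr rfl fun x _ => by ring
  linarith [sum_mul_log_le_sum_mul_log_self hm hp hmsum]

lemma sum_mul_le_card_sub_one_mul [Nonempty X] {r v : X → ℝ} {ρ L : ℝ} (hr0 : ∑ x, r x = 0)
    (hr : ∀ x, |r x| ≤ ρ) (hv : ∀ x y, |v x - v y| ≤ L) :
    ∑ x, r x * v x ≤ (Fintype.card X - 1) * (ρ * L) := by
  classical
  obtain ⟨a⟩ := ‹Nonempty X›
  have hshift : ∑ x, r x * v x = ∑ x ∈ univ.erase a, r x * (v x - v a) := by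
    rw [sum_erase _ (by rw [sub_self, mul_zero]), ← sub_eq_zero, ← sum_sub_distrib]
    simp only [mul_sub, sub_sub_cancel, ← sum_mul, hr0, zero_mul]
  have hterm : ∀ x, r x * (v x - v a) ≤ ρ * L := fun x =>
    calc r x * (v x - v a) ≤ |r x| * |v x - v a| := by rw [← abs_mul]; exact le_abs_self _
      _ ≤ ρ * L := mul_le_mul (hr x) (hv x a) (abs_nonneg _) ((abs_nonneg _).trans (hr x))
  calc ∑ x, r x * v x ≤ (univ.erase a).card • (ρ * L) :=
        hshift ▸ sum_le_card_nsmul _ _ _ fun x _ => hterm x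
    _ = (Fintype.card X - 1) * (ρ * L) := by
      rw [nsmul_eq_mul, card_erase_of_mem (mem_univ a), card_univ, Nat.cast_pred Fintype.card_pos]

lemma abs_log_sub_log_le {l a b : ℝ} (hl : 0 < l) (ha : a ∈ Set.Ioc l 1) (hb : b ∈ Set.Ioc l 1) :
    |log a - log b| ≤ log (1 / l) := by
  have hla : log l ≤ log a := log_le_log hl ha.1.le
  have hlb : log l ≤ log b := log_le_log hl hb.1.le
  have ha1 : log a ≤ 0 := log_nonpos (hl.trans ha.1).le ha.2
  have hb1 : log b ≤ 0 := log_nonpos (hl.trans hb.1).le hb.2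
  simpa [log_inv] using abs_sub_le_of_le_of_le hla ha1 hlb hb1

lemma neg_sum_mul_logb (b : ℝ) (f : X → ℝ) :
    -∑ x, f x * logb b (f x) = (-∑ x, f x * log (f x)) / log b := by
  simp only [logb, mul_div_assoc', sum_div, neg_div]

end

/-- **Entropy of a mixture, all symbol probabilities large.** If all coordinates of the
probability distribution `p` exceed `λ` with `0 < λ < 1/4`, and `q` is any probability
distribution, then `H(λq + (1−λ)p) ≤ H(p) + (|X|−1) λ log₂(1/λ)`. -/
theorem entropy_mixture_bound_of_min_gt {X : Type*} [Fintype X] [Nonempty X]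
    (p q : X → ℝ)
    (hp : ∀ x, 0 ≤ p x) (hpsum : ∑ x, p x = 1)
    (hq : ∀ x, 0 ≤ q x) (hqsum : ∑ x, q x = 1)
    (l : ℝ) (hl0 : 0 < l) (hl1 : l < 1/4)
    (hmin : ∀ x, l < p x) :
    (-∑ x, (l * q x + (1 - l) * p x) * Real.logb 2 (l * q x + (1 - l) * p x))
      ≤ (-∑ x, p x * Real.logb 2 (p x)) +
          ((Fintype.card X : ℝ) - 1) * l * Real.logb 2 (1 / l) := by
  have hp_mem : ∀ x, p x ∈ Set.Ioc l 1 := fun x =>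
    ⟨hmin x, hpsum ▸ single_le_sum (fun y _ => hp y) (mem_univ x)⟩
  have hq_le : ∀ x, q x ≤ 1 := fun x => hqsum ▸ single_le_sum (fun y _ => hq y) (mem_univ x)
  have hS : ∑ x, (p x - q x) * log (p x) ≤ (Fintype.card X - 1) * (1 * log (1 / l)) :=
    sum_mul_le_card_sub_one_mul (by rw [sum_sub_distrib, hpsum, hqsum, sub_self])
      (fun x => abs_sub_le_of_nonneg_of_le (hp x) (hp_mem x).2 (hq x) (hq_le x))
      (fun x y => abs_log_sub_log_le hl0 (hp_mem x) (hp_mem y))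
  have hmix := neg_sum_mul_log_mix_le (fun x => hl0.trans (hmin x)) hq (hpsum.trans hqsum.symm)
    hl0.le (by linarith)
  rw [neg_sum_mul_logb, neg_sum_mul_logb, logb, mul_div_assoc', ← add_div]
  refine div_le_div_of_nonneg_right ?_ (log_nonneg one_le_two)
  nlinarith [mul_le_mul_of_nonneg_left hS hl0.le]
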